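/- For every finite connected simple graph G and every t ≥ 2, the maximum length of a cooling sequence in ILT_t(G) equals the maximum length of a cooling sequence in ILT_2(G). -/

import Mathlib

/-- A cooling sequence for `G`: a sequence `v : Fin k → V` of sources (the `i`-th source,
0-based, is chosen in round `i + 1`) such that each source is uncooled when chosen
(`dist (v i) (v j) > j - i` for `i < j` in 1-based indexing), and the sequence cannot be
extended: every vertex is cooled by the end of round `k + 1`. -/
def IsCoolingSeq {V : Type*} (G : SimpleGraph V) {k : ℕ} (v : Fin k → V) : Prop :=
  (∀ i j : Fin k, i < j → (j : ℕ) - (i : ℕ) < G.dist (v i) (v j)) ∧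
  (∀ u : V, ∃ i : Fin k, (i : ℕ) + 1 + G.dist (v i) u ≤ k + 1)

/-- The round in which the cooling process with sources `v` ends: the maximum over
vertices `u` of the first round in which `u` is cooled, `min_i (i + dist (v i) u)`
(1-based `i`). -/
noncomputable def coolTime {V : Type*} [Fintype V] (G : SimpleGraph V) {k : ℕ}
    (v : Fin k → V) : ℕ :=
  Finset.univ.sup fun u : V => sInf {m : ℕ | ∃ i : Fin k, m = (i : ℕ) + 1 + G.dist (v i) u}

/-- The cooling number of `G`: the maximum, over all cooling sequences of `G`, of the
round in which the cooling process ends. -/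
noncomputable def coolingNumber {V : Type*} [Fintype V] (G : SimpleGraph V) : ℕ :=
  sSup {T : ℕ | ∃ (k : ℕ) (v : Fin k → V), IsCoolingSeq G v ∧ T = coolTime G v}

/-- The Iterated Local Transitivity graph of `G`, on vertex set `V ⊕ V`, where `Sum.inr x`
is the clone of the original vertex `Sum.inl x`: clones are adjacent to their original
vertex and to its neighbors, and clones are pairwise non-adjacent. -/
def ILT {V : Type*} (G : SimpleGraph V) : SimpleGraph (V ⊕ V) :=
  SimpleGraph.fromRel fun a b =>
    match a, b with
    | Sum.inl x, Sum.inl y => G.Adj x y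
    | Sum.inl x, Sum.inr y => x = y ∨ G.Adj x y
    | Sum.inr x, Sum.inl y => x = y ∨ G.Adj x y
    | Sum.inr _, Sum.inr _ => False

/-- The vertex type of `ILT_t(G)`. -/
def ILTVert (V : Type*) : ℕ → Type _
  | 0 => V
  | t + 1 => ILTVert V t ⊕ ILTVert V t

instance ILTVert.fintype (V : Type*) [Fintype V] : ∀ t, Fintype (ILTVert V t)
  | 0 => inferInstanceAs (Fintype V)
  | t + 1 =>
    letI := ILTVert.fintype V t
    inferInstanceAs (Fintype (ILTVert V t ⊕ ILTVert V t))

/-- `ILTiter G t` is the result of `t` iterated applications of the ILT construction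
to `G`. -/
def ILTiter {V : Type*} (G : SimpleGraph V) : (t : ℕ) → SimpleGraph (ILTVert V t)
  | 0 => G
  | t + 1 => ILT (ILTiter G t)

/-- The maximum length of a cooling sequence of `G`. -/
noncomputable def maxCoolSeqLen {V : Type*} [Fintype V] (G : SimpleGraph V) : ℕ :=
  sSup {k : ℕ | ∃ v : Fin k → V, IsCoolingSeq G v}

/-!
Projecting `ILT_t(G)` down to `G` never increases distances, while two vertices of `ILT_t(G)`
are at distance at most `max (dist of their projections) 2`, since in `ILT(G)` a clone can be
routed through its original vertex. So a separated sequence of `ILT_t(G)` projects to a sequence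
of `G` that is separated at index gaps `≥ 2`. Conversely, for `t ≥ 2` such a sequence of `G`
lifts to `ILT_t(G)` by choosing top-level clones of alternately original and cloned vertices of
the level below: consecutive sources are then distinct clones, hence non-adjacent. As every
separated sequence extends greedily to a cooling sequence, the maximum length of a cooling
sequence of `ILT_t(G)` is, for every `t ≥ 2`, the maximum length of such a sequence of `G`.
-/

open SimpleGraph Sum

namespace ILT

variable {V : Type*} {G : SimpleGraph V}

def proj : V ⊕ V → V := Sum.elim id id

@[simp] lemma proj_inl (x : V) : proj (inl x : V ⊕ V) = x := rfl
@[simp] lemma proj_inr (x : V) : proj (inr x : V ⊕ V) = x := rfl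

@[simp] lemma adj_inl_inl {x y : V} : (ILT G).Adj (inl x) (inl y) ↔ G.Adj x y := by
  simp only [ILT, fromRel_adj, ne_eq, inl.injEq]
  exact ⟨fun h => h.2.elim id Adj.symm, fun h => ⟨h.ne, .inl h⟩⟩

@[simp] lemma adj_inl_inr {x y : V} : (ILT G).Adj (inl x) (inr y) ↔ x = y ∨ G.Adj x y := by
  simp only [ILT, fromRel_adj, ne_eq, reduceCtorEq, not_false_eq_true, true_and]
  exact ⟨fun h => h.elim id fun h => h.imp Eq.symm Adj.symm, .inl⟩

@[simp] lemma adj_inr_inl {x y : V} : (ILT G).Adj (inr x) (inl y) ↔ x = y ∨ G.Adj x y := by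
  simp only [ILT, fromRel_adj, ne_eq, reduceCtorEq, not_false_eq_true, true_and]
  exact ⟨fun h => h.elim id fun h => h.imp Eq.symm Adj.symm, .inl⟩

@[simp] lemma not_adj_inr_inr {x y : V} : ¬(ILT G).Adj (inr x) (inr y) := by
  simp [ILT]

lemma adj_inl_of_adj_proj {x : V} {c : V ⊕ V} (h : G.Adj x (proj c)) :
    (ILT G).Adj (inl x) c := by
  rcases c with y | y <;> simp_all

lemma adj_of_proj_eq {a b : V ⊕ V} (h : proj a = proj b) (hne : a ≠ b) : (ILT G).Adj a b := by
  rcases a with x | x <;> rcases b with y | y <;> simp_all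

lemma proj_eq_or_adj_of_adj {a b : V ⊕ V} (h : (ILT G).Adj a b) :
    proj a = proj b ∨ G.Adj (proj a) (proj b) := by
  rcases a with x | x <;> rcases b with y | y <;> simp_all

lemma exists_walk_of_proj_eq {a b : V ⊕ V} (h : proj a = proj b) :
    ∃ q : (ILT G).Walk a b, q.length ≤ 1 := by
  by_cases hab : a = b
  · subst hab
    exact ⟨.nil, zero_le_one⟩
  · exact ⟨.cons (adj_of_proj_eq h hab) .nil, le_rfl⟩

lemma exists_walk_inl {x y : V} (p : G.Walk x y) {c : V ⊕ V} (hc : proj c = y) :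
    ∃ q : (ILT G).Walk (inl x) c, q.length ≤ max p.length 1 := by
  induction p with
  | nil => simpa using exists_walk_of_proj_eq (G := G) (a := inl _) hc.symm
  | @cons x z y h p ih =>
    rcases p.length.eq_zero_or_pos with hp | hp
    · obtain rfl := p.eq_of_length_eq_zero hp
      exact ⟨.cons (adj_inl_of_adj_proj (hc ▸ h)) .nil, by simp⟩
    · obtain ⟨q, hq⟩ := ih hc
      exact ⟨.cons (adj_inl_inl.mpr h) q, by simp only [Walk.length_cons]; omega⟩

lemma exists_walk_inr {x y : V} (p : G.Walk x y) {c : V ⊕ V} (hc : proj c = y) :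
    ∃ q : (ILT G).Walk (inr x) c, q.length ≤ max p.length 2 := by
  cases p with
  | nil =>
    obtain ⟨q, hq⟩ := exists_walk_of_proj_eq (G := G) (a := inr _) hc.symm
    exact ⟨q, by omega⟩
  | cons h p =>
    obtain ⟨q, hq⟩ := exists_walk_inl p hc
    exact ⟨.cons (adj_inr_inl.mpr (.inr h)) q, by simp only [Walk.length_cons]; omega⟩

lemma exists_walk (hG : G.Connected) (a b : V ⊕ V) :
    ∃ q : (ILT G).Walk a b, q.length ≤ max (G.dist (proj a) (proj b)) 2 := by
  obtain ⟨p, hp⟩ := hG.exists_walk_length_eq_dist (proj a) (proj b)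
  rw [← hp]
  rcases a with x | x
  · obtain ⟨q, hq⟩ := exists_walk_inl p (c := b) rfl
    exact ⟨q, hq.trans (max_le_max_left _ one_le_two)⟩
  · exact exists_walk_inr p rfl

lemma exists_walk_proj {a b : V ⊕ V} (p : (ILT G).Walk a b) :
    ∃ q : G.Walk (proj a) (proj b), q.length ≤ p.length := by
  induction p with
  | nil => exact ⟨.nil, le_rfl⟩
  | cons h p ih =>
    obtain ⟨q, hq⟩ := ih
    rcases proj_eq_or_adj_of_adj h with heq | hadj
    · exact ⟨q.copy heq.symm rfl, by simp only [Walk.length_cons, Walk.length_copy]; omega⟩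
    · exact ⟨.cons hadj q, by simp only [Walk.length_cons]; omega⟩

end ILT

namespace ILTVert

variable {V : Type*}

def proj : {t : ℕ} → ILTVert V t → V
  | 0, x => x
  | _ + 1, a => proj (ILT.proj a)

def embed : {t : ℕ} → V → ILTVert V t
  | 0, x => x
  | _ + 1, x => Sum.inl (embed x)

@[simp] lemma proj_embed (t : ℕ) (x : V) : (embed x : ILTVert V t).proj = x := by
  induction t with
  | zero => rfl
  | succ t ih => exact ih

end ILTVert

namespace SimpleGraph.Connected

variable {V : Type*} {G : SimpleGraph V}

lemma ilt (hG : G.Connected) : (ILT G).Connected :=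
  (connected_iff _).mpr ⟨fun a b => (ILT.exists_walk hG a b).choose.reachable,
    hG.nonempty.map inl⟩

lemma dist_ilt_le (hG : G.Connected) (a b : V ⊕ V) :
    (ILT G).dist a b ≤ max (G.dist (ILT.proj a) (ILT.proj b)) 2 :=
  let ⟨q, hq⟩ := ILT.exists_walk hG a b
  (dist_le q).trans hq

lemma dist_proj_le_dist_ilt (hG : G.Connected) (a b : V ⊕ V) :
    G.dist (ILT.proj a) (ILT.proj b) ≤ (ILT G).dist a b := by
  obtain ⟨p, hp⟩ := hG.ilt.exists_walk_length_eq_dist a b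
  obtain ⟨q, hq⟩ := ILT.exists_walk_proj p
  exact (dist_le q).trans (hp ▸ hq)

lemma two_le_dist_ilt_inr (hG : G.Connected) {x y : V} (hxy : x ≠ y) :
    2 ≤ (ILT G).dist (inr x) (inr y) :=
  hG.ilt.one_lt_dist_of_ne_of_not_adj (by simpa using hxy) ILT.not_adj_inr_inr

lemma iltIter (hG : G.Connected) (t : ℕ) : (ILTiter G t).Connected := by
  induction t with
  | zero => exact hG
  | succ t ih => exact ih.ilt

lemma dist_proj_le_dist_iltIter (hG : G.Connected) {t : ℕ} (a b : ILTVert V t) :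
    G.dist a.proj b.proj ≤ (ILTiter G t).dist a b := by
  induction t with
  | zero => exact le_rfl
  | succ t ih => exact (ih _ _).trans ((hG.iltIter t).dist_proj_le_dist_ilt a b)

lemma dist_iltIter_le (hG : G.Connected) {t : ℕ} (a b : ILTVert V t) :
    (ILTiter G t).dist a b ≤ max (G.dist a.proj b.proj) 2 := by
  induction t with
  | zero => exact le_max_left _ _
  | succ t ih =>
    calc (ILTiter G (t + 1)).dist a b
        ≤ max ((ILTiter G t).dist (ILT.proj a) (ILT.proj b)) 2 := (hG.iltIter t).dist_ilt_le a b
      _ ≤ max (max (G.dist a.proj b.proj) 2) 2 := max_le_max_right _ (ih _ _)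
      _ = max (G.dist a.proj b.proj) 2 := by rw [max_assoc, max_self]

end SimpleGraph.Connected

section Cooling

variable {V : Type*} {G : SimpleGraph V} {k : ℕ} {v : Fin k → V}

def IsGapSeparated (G : SimpleGraph V) (m : ℕ) (v : Fin k → V) : Prop :=
  ∀ i j : Fin k, (i : ℕ) + m ≤ j → (j : ℕ) - i < G.dist (v i) (v j)

def separatedLengths (G : SimpleGraph V) (m : ℕ) : Set ℕ :=
  {k | ∃ v : Fin k → V, IsGapSeparated G m v}

lemma IsCoolingSeq.isGapSeparated (h : IsCoolingSeq G v) : IsGapSeparated G 1 v :=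
  fun i j hij => h.1 i j hij

lemma IsGapSeparated.injective (h : IsGapSeparated G 1 v) : Function.Injective v := by
  intro i j hij
  by_contra hne
  rcases Fin.lt_or_lt_of_ne hne with hlt | hlt
  · simpa [hij] using h i j hlt
  · simpa [hij] using h j i hlt

lemma IsGapSeparated.card_le [Fintype V] (h : IsGapSeparated G 1 v) : k ≤ Fintype.card V := by
  simpa using Fintype.card_le_of_injective v h.injective

lemma IsGapSeparated.snoc (h : IsGapSeparated G 1 v) {u : V}
    (hu : ∀ i : Fin k, k + 1 < (i : ℕ) + 1 + G.dist (v i) u) :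
    IsGapSeparated G 1 (Fin.snoc v u : Fin (k + 1) → V) := by
  intro i j hij
  induction j using Fin.lastCases with
  | last =>
    induction i using Fin.lastCases with
    | last => simp at hij
    | cast i =>
      simp only [Fin.val_last, Fin.val_castSucc, Fin.snoc_castSucc, Fin.snoc_last]
      have := hu i
      omega
  | cast j =>
    induction i using Fin.lastCases with
    | last =>
      simp only [Fin.val_last, Fin.val_castSucc] at hij
      omega
    | cast i =>
      simp only [Fin.val_castSucc, Fin.snoc_castSucc] at hij ⊢
      exact h i j hij

lemma IsGapSeparated.exists_isCoolingSeq [Fintype V] {k : ℕ} {v : Fin k → V}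
    (h : IsGapSeparated G 1 v) :
    ∃ k' ≥ k, ∃ w : Fin k' → V, IsCoolingSeq G w := by
  by_cases hcool : ∀ u : V, ∃ i : Fin k, (i : ℕ) + 1 + G.dist (v i) u ≤ k + 1
  · exact ⟨k, le_rfl, v, h, hcool⟩
  · push Not at hcool
    obtain ⟨u, hu⟩ := hcool
    have hk : k < Fintype.card V := (h.snoc hu).card_le
    obtain ⟨k', hk', w, hw⟩ := (h.snoc hu).exists_isCoolingSeq
    exact ⟨k', by omega, w, hw⟩
termination_by Fintype.card V - k

lemma maxCoolSeqLen_eq_sSup_separatedLengths [Fintype V] (G : SimpleGraph V) :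
    maxCoolSeqLen G = sSup (separatedLengths G 1) := by
  have hbdd : BddAbove (separatedLengths G 1) :=
    ⟨Fintype.card V, fun _ ⟨_, hv⟩ => hv.card_le⟩
  have hzero : 0 ∈ separatedLengths G 1 := ⟨Fin.elim0, fun i => i.elim0⟩
  have hcool :
      ∀ k ∈ separatedLengths G 1, ∃ k' ≥ k, ∃ w : Fin k' → V, IsCoolingSeq G w :=
    fun _ ⟨_, hv⟩ => hv.exists_isCoolingSeq
  have hsub : {k | ∃ w : Fin k → V, IsCoolingSeq G w} ⊆ separatedLengths G 1 :=
    fun _ ⟨_, hw⟩ => ⟨_, hw.isGapSeparated⟩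
  apply le_antisymm
  · obtain ⟨k', -, w, hw⟩ := hcool 0 hzero
    exact csSup_le_csSup hbdd ⟨k', w, hw⟩ hsub
  · refine csSup_le ⟨0, hzero⟩ fun k hk => ?_
    obtain ⟨k', hk', w, hw⟩ := hcool k hk
    exact le_csSup_of_le (hbdd.mono hsub) ⟨w, hw⟩ hk'

end Cooling

section ILTiter

variable {V : Type*} {G : SimpleGraph V}

lemma separatedLengths_iltIter_subset (hG : G.Connected) (t : ℕ) :
    separatedLengths (ILTiter G t) 1 ⊆ separatedLengths G 2 := by
  rintro k ⟨v, hv⟩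
  refine ⟨fun i => (v i).proj, fun i j hij => ?_⟩
  show (j : ℕ) - i < G.dist (v i).proj (v j).proj
  have := (hv i j (by omega)).trans_le (hG.dist_iltIter_le (v i) (v j))
  rcases max_cases (G.dist (v i).proj (v j).proj) 2 with ⟨h, -⟩ | ⟨h, -⟩ <;> omega

lemma separatedLengths_subset_iltIter (hG : G.Connected) (t : ℕ) :
    separatedLengths G 2 ⊆ separatedLengths (ILTiter G (t + 2)) 1 := by
  rintro k ⟨u, hu⟩
  let layer (i : Fin k) : ILTVert V (t + 1) :=
    if Even (i : ℕ) then Sum.inl (ILTVert.embed (u i)) else Sum.inr (ILTVert.embed (u i))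
  let w (i : Fin k) : ILTVert V (t + 2) := Sum.inr (layer i)
  have hw : ∀ i, (w i).proj = u i := by
    intro i
    by_cases hi : Even (i : ℕ) <;> simp only [w, layer, hi, ↓reduceIte] <;>
      exact ILTVert.proj_embed t (u i)
  refine ⟨w, fun i j hij => ?_⟩
  rcases (show (i : ℕ) + 2 ≤ j ∨ (j : ℕ) = i + 1 by omega) with hfar | hnext
  · calc (j : ℕ) - i < G.dist (u i) (u j) := hu i j hfar
      _ = G.dist (w i).proj (w j).proj := by rw [hw, hw]
      _ ≤ (ILTiter G (t + 2)).dist (w i) (w j) := hG.dist_proj_le_dist_iltIter _ _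
  · have hlayer : layer i ≠ layer j := by
      by_cases hi : Even (i : ℕ) <;> simp [layer, hi, hnext, Nat.even_add_one] <;> nofun
    have := (hG.iltIter (t + 1)).two_le_dist_ilt_inr hlayer
    change 2 ≤ (ILTiter G (t + 2)).dist (w i) (w j) at this
    omega

lemma separatedLengths_iltIter (hG : G.Connected) (t : ℕ) :
    separatedLengths (ILTiter G (t + 2)) 1 = separatedLengths G 2 :=
  (separatedLengths_iltIter_subset hG _).antisymm (separatedLengths_subset_iltIter hG t)

end ILTiter

/-- For every finite connected simple graph `G` and `t ≥ 2`, the maximum length of a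
cooling sequence of `ILT_t(G)` equals that of `ILT_2(G)`. -/
theorem maxCoolSeqLen_ILTiter {V : Type*} [Fintype V] (G : SimpleGraph V)
    (hG : G.Connected) (t : ℕ) (ht : 2 ≤ t) :
    maxCoolSeqLen (ILTiter G t) = maxCoolSeqLen (ILTiter G 2) := by
  obtain ⟨s, rfl⟩ := Nat.exists_eq_add_of_le' ht
  rw [maxCoolSeqLen_eq_sSup_separatedLengths, maxCoolSeqLen_eq_sSup_separatedLengths,
    separatedLengths_iltIter hG s, separatedLengths_iltIter hG 0]
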